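/- arXiv:1101.0403 — 3 statements merged into one kernel-verified Lean document; each statement's English description precedes it below -/
import Mathlib

section
/- There exists a constant c > 0 such that for every δ > 0, every integer A ≥ 1, and every real polynomial q : ℝ → ℝ satisfying 0 ≤ q(j) ≤ δ for all integers j with A ≤ j ≤ 4A, if there is a real number x with (3/2)·A ≤ x ≤ 3A and q(x) > 2δ, then the degree of q is at least c·A. -/
/-!
Let `m = ⌊x⌋₊`, `K = ⌊A / 4⌋`, `ω(s) = ∏_{k<K} ((2k+1)² - s²)` and `W(t) = ω(t - m - 1/2)`, a
polynomial of degree `2K`. The shift identity `ω(s + 2) (2K - 1 - s) = -ω(s) (2K + 1 + s)` shows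
that `ω` alternates in sign and grows in modulus along `s = 2j - 1/2`, so `(-1)^j W ≥ P := ω(1/2)`
at the integer nodes `m, m - 1, m - 3, …` left of `x` and `m + 1, m + 2, m + 4, …` right of it
(all in `[A, 4A]`), while a Wallis-type product estimate gives `W(x) ≤ 2P`. Hence
`δ (2P + 3W) - 4P q` alternates in sign along these `2K + 2` nodes and `x`, so its degree, which is
at most `max (deg q) (2K)`, is at least `2K + 2`.
-/

open Polynomial Finset

theorem mul_neg_of_neg_one_pow_mul_pos {s t : ℝ} {j : ℕ} (hs : 0 < (-1) ^ j * s)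
    (ht : 0 < (-1) ^ (j + 1) * t) : s * t < 0 := by
  rcases neg_one_pow_eq_or ℝ j with h | h <;> rw [pow_succ, h] at ht <;> rw [h] at hs <;> nlinarith

namespace Polynomial

theorem exists_isRoot_mem_Ioo_of_eval_mul_neg {H : ℝ[X]} {a b : ℝ} (hab : a < b)
    (h : H.eval a * H.eval b < 0) : ∃ t ∈ Set.Ioo a b, H.IsRoot t := by
  have hcont : ContinuousOn (fun t => H.eval t) (Set.Icc a b) := H.continuous.continuousOn
  rcases mul_neg_iff.mp h with ⟨ha, hb⟩ | ⟨ha, hb⟩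
  · exact intermediate_value_Ioo' hab.le hcont ⟨hb, ha⟩
  · exact intermediate_value_Ioo hab.le hcont ⟨ha, hb⟩

theorem le_natDegree_of_eval_mul_neg {H : ℝ[X]} {p : ℕ → ℝ} {n : ℕ}
    (hp : ∀ i < n, p i < p (i + 1)) (hH : ∀ i < n, H.eval (p i) * H.eval (p (i + 1)) < 0) :
    n ≤ H.natDegree := by
  rcases Nat.eq_zero_or_pos n with rfl | hn
  · exact Nat.zero_le _
  have hH0 : H ≠ 0 := by rintro rfl; simpa using hH 0 hn
  choose! ρ hρ hρroot using fun i hi => exists_isRoot_mem_Ioo_of_eval_mul_neg (hp i hi) (hH i hi)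
  have hmono : StrictMonoOn p (Set.Iic n) := strictMonoOn_Iic_of_lt_succ hp
  have hρmono : StrictMonoOn ρ (Set.Iio n) := fun i hi j hj hij =>
    calc ρ i < p (i + 1) := (hρ i hi).2
      _ ≤ p j := hmono.monotoneOn (Set.mem_Iic.mpr (Nat.succ_le_of_lt hi))
          (Set.mem_Iic.mpr hj.le) hij
      _ < ρ j := (hρ j hj).1
  have hρinj : Set.InjOn ρ (range n) := by
    rw [coe_range]
    exact hρmono.injOn
  calc n = #((range n).image ρ) := by rw [card_image_of_injOn hρinj, card_range]
    _ ≤ H.natDegree := card_le_degree_of_subset_roots fun t ht => by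
      obtain ⟨i, hi, rfl⟩ := mem_image.mp (mem_val.mp ht)
      exact (mem_roots hH0).mpr (hρroot i (mem_range.mp hi))

theorem add_add_two_le_natDegree_of_alternating {H : ℝ[X]} {x : ℝ} {l r : ℕ → ℝ} {a b : ℕ}
    (hl : ∀ j < a, l (j + 1) < l j) (hr : ∀ j < b, r j < r (j + 1)) (hlx : l 0 < x)
    (hxr : x < r 0) (hHl : ∀ j ≤ a, 0 < (-1) ^ j * H.eval (l j))
    (hHr : ∀ j ≤ b, 0 < (-1) ^ j * H.eval (r j)) (hHx : H.eval x < 0) :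
    a + b + 2 ≤ H.natDegree := by
  -- `p` lists `l a, …, l 0, x, r 0, …, r b` in increasing order
  set p : ℕ → ℝ := fun i => if i ≤ a then l (a - i) else if i = a + 1 then x else r (i - (a + 2))
  have hpl : ∀ i ≤ a, p i = l (a - i) := fun i hi => if_pos hi
  have hpx : p (a + 1) = x := by simp [p]
  have hpr : ∀ i, a + 2 ≤ i → p i = r (i - (a + 2)) := fun i hi => by
    simp only [p]; rw [if_neg (by omega), if_neg (by omega)]
  have hHx' : 0 < (-1) ^ 1 * H.eval x := by linarith
  have hstep : ∀ i < a + b + 2, p i < p (i + 1) ∧ H.eval (p i) * H.eval (p (i + 1)) < 0 := by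
    intro i hi
    rcases lt_trichotomy i a with hia | rfl | hia
    · obtain ⟨j, rfl⟩ : ∃ j, a = i + j + 1 := ⟨a - i - 1, by omega⟩
      rw [hpl i (by omega), hpl (i + 1) (by omega), show i + j + 1 - i = j + 1 by omega,
        show i + j + 1 - (i + 1) = j by omega, mul_comm]
      exact ⟨hl j (by omega),
        mul_neg_of_neg_one_pow_mul_pos (hHl j (by omega)) (hHl (j + 1) (by omega))⟩
    · rw [hpl i le_rfl, hpx, Nat.sub_self]
      exact ⟨hlx, mul_neg_of_neg_one_pow_mul_pos (j := 0)
        (by simpa using hHl 0 (Nat.zero_le _)) hHx'⟩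
    · rcases (Nat.succ_le_of_lt hia).eq_or_lt with rfl | hia
      · rw [hpx, hpr (a + 2) le_rfl, Nat.sub_self]
        exact ⟨hxr, mul_neg_of_neg_one_pow_mul_pos hHx' (by simpa using hHr 0 (Nat.zero_le _))⟩
      · rw [hpr i hia, hpr (i + 1) (by omega), show i + 1 - (a + 2) = i - (a + 2) + 1 by omega]
        exact ⟨hr _ (by omega),
          mul_neg_of_neg_one_pow_mul_pos (hHr _ (by omega)) (hHr _ (by omega))⟩
  exact le_natDegree_of_eval_mul_neg (fun i hi => (hstep i hi).1) (fun i hi => (hstep i hi).2)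

theorem add_add_two_le_max_natDegree_of_comparison {q W : ℝ[X]} {δ P x : ℝ} {l r : ℕ → ℝ}
    {a b : ℕ} (hδ : 0 < δ) (hP : 0 < P)
    (hl : ∀ j < a, l (j + 1) < l j) (hr : ∀ j < b, r j < r (j + 1)) (hlx : l 0 < x)
    (hxr : x < r 0) (hql : ∀ j ≤ a, q.eval (l j) ∈ Set.Icc 0 δ)
    (hqr : ∀ j ≤ b, q.eval (r j) ∈ Set.Icc 0 δ) (hWl : ∀ j ≤ a, P ≤ (-1) ^ j * W.eval (l j))
    (hWr : ∀ j ≤ b, P ≤ (-1) ^ j * W.eval (r j)) (hWx : W.eval x ≤ 2 * P)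
    (hqx : 2 * δ < q.eval x) :
    a + b + 2 ≤ max q.natDegree W.natDegree := by
  set H := C (2 * δ * P) + C (3 * δ) * W - C (4 * P) * q
  have hH : ∀ t, H.eval t = 2 * δ * P + 3 * δ * W.eval t - 4 * P * q.eval t := fun t => by
    simp [H]
  have hnode : ∀ t j, q.eval t ∈ Set.Icc 0 δ → P ≤ (-1) ^ j * W.eval t →
      0 < (-1) ^ j * H.eval t := by
    rintro t j ⟨hq0, hqδ⟩ hWt
    rw [hH]
    rcases neg_one_pow_eq_or ℝ j with h | h <;> rw [h] at hWt ⊢ <;> nlinarith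
  have hdeg : H.natDegree ≤ max q.natDegree W.natDegree :=
    (natDegree_sub_le _ _).trans <| max_le
      ((natDegree_add_le _ _).trans <| max_le ((natDegree_C _).trans_le (Nat.zero_le _))
        ((natDegree_C_mul_le _ _).trans (le_max_right _ _)))
      ((natDegree_C_mul_le _ _).trans (le_max_left _ _))
  refine le_trans ?_ hdeg
  refine add_add_two_le_natDegree_of_alternating hl hr hlx hxr
    (fun j hj => hnode _ j (hql j hj) (hWl j hj)) (fun j hj => hnode _ j (hqr j hj) (hWr j hj)) ?_
  rw [hH]
  nlinarith

end Polynomial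

noncomputable def oddRootsPoly (K : ℕ) : ℝ[X] :=
  ∏ k ∈ range K, (C ((2 * k + 1 : ℝ) ^ 2) - X ^ 2)

namespace oddRootsPoly

variable (K : ℕ)

theorem natDegree_le : (oddRootsPoly K).natDegree ≤ 2 * K := by
  refine (natDegree_prod_le _ _).trans ((sum_le_card_nsmul _ _ 2 fun k _ => ?_).trans ?_)
  · exact (natDegree_sub_le _ _).trans (by rw [natDegree_C, natDegree_X_pow]; omega)
  · rw [card_range, smul_eq_mul, mul_comm]

theorem eval_eq (s : ℝ) : (oddRootsPoly K).eval s = ∏ k ∈ range K, ((2 * k + 1) ^ 2 - s ^ 2) := by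
  simp [oddRootsPoly, eval_prod]

theorem eval_neg (s : ℝ) : (oddRootsPoly K).eval (-s) = (oddRootsPoly K).eval s := by
  simp [eval_eq]

theorem eval_half_pos : 0 < (oddRootsPoly K).eval (1 / 2) := by
  rw [eval_eq]
  exact prod_pos fun k _ => by nlinarith [(Nat.cast_nonneg k : (0 : ℝ) ≤ k)]

theorem eval_add_two {s : ℝ} (hs : s ≠ -1) :
    (oddRootsPoly K).eval (s + 2) * (2 * K - 1 - s) =
      -(oddRootsPoly K).eval s * (2 * K + 1 + s) := by
  have shift (f : ℕ → ℝ) : (∏ k ∈ range K, f (k + 1)) * f 0 = (∏ k ∈ range K, f k) * f K := by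
    rw [← prod_range_succ', prod_range_succ]
  set u : ℕ → ℝ := fun k => 2 * k - 1 - s
  set v : ℕ → ℝ := fun k => 2 * k + 1 + s
  have hs2 : (oddRootsPoly K).eval (s + 2) = (∏ k ∈ range K, u k) * ∏ k ∈ range K, v (k + 1) := by
    rw [eval_eq, ← prod_mul_distrib]
    refine prod_congr rfl fun k _ => ?_
    simp only [u, v]; push_cast; ring
  have hs0 : (oddRootsPoly K).eval s = (∏ k ∈ range K, u (k + 1)) * ∏ k ∈ range K, v k := by
    rw [eval_eq, ← prod_mul_distrib]
    refine prod_congr rfl fun k _ => ?_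
    simp only [u, v]; push_cast; ring
  have hu := shift u
  have hv := shift v
  have hu0 : u 0 = -1 - s := by simp [u]
  have hv0 : v 0 = 1 + s := by simp [v]
  have huK : u K = 2 * K - 1 - s := rfl
  have hvK : v K = 2 * K + 1 + s := rfl
  clear_value u v
  rw [hs2, hs0]
  apply mul_right_cancel₀ (show 1 + s ≠ 0 from fun h => hs (by linarith))
  rw [hu0, huK] at hu
  rw [hv0, hvK] at hv
  linear_combination ((∏ k ∈ range K, u k) * (2 * K - 1 - s)) * hv
    - ((∏ k ∈ range K, v k) * (2 * K + 1 + s)) * hu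

theorem eval_half_le_neg_one_pow_mul {j : ℕ} (hj : j ≤ K) :
    (oddRootsPoly K).eval (1 / 2) ≤ (-1) ^ j * (oddRootsPoly K).eval (2 * (j : ℝ) - 1 / 2) := by
  induction j with
  | zero => rw [← eval_neg]; norm_num
  | succ j ih =>
    have hj0 : (0 : ℝ) ≤ j := Nat.cast_nonneg j
    have hjK : (j : ℝ) + 1 ≤ K := by exact_mod_cast hj
    have hrec := eval_add_two K (s := 2 * j - 1 / 2) (by linarith)
    have ih := ih (by omega)
    rw [show (2 * ((j + 1 : ℕ) : ℝ) - 1 / 2) = 2 * j - 1 / 2 + 2 by push_cast; ring, pow_succ]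
    set u : ℝ := (-1) ^ j * (oddRootsPoly K).eval (2 * (j : ℝ) - 1 / 2)
    set v : ℝ := (-1) ^ j * -1 * (oddRootsPoly K).eval (2 * (j : ℝ) - 1 / 2 + 2)
    have huv : v * (2 * K - 2 * j - 1 / 2) = u * (2 * K + 2 * j + 1 / 2 : ℝ) := by
      linear_combination (-(-1 : ℝ) ^ j) * hrec
    have hu : 0 < u := (eval_half_pos K).trans_le ih
    nlinarith

theorem add_two_mul_prod_sq_le : (K + 2) * ∏ k ∈ range K, (2 * k + 1 : ℝ) ^ 2 ≤
    2 * (K + 1) * (oddRootsPoly K).eval (1 / 2) := by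
  induction K with
  | zero => simp [oddRootsPoly]
  | succ K ih =>
    have hY := (eval_half_pos K).le
    rw [eval_eq] at ih hY ⊢
    rw [prod_range_succ, prod_range_succ]
    set X := ∏ k ∈ range K, (2 * k + 1 : ℝ) ^ 2
    set Y := ∏ k ∈ range K, ((2 * k + 1 : ℝ) ^ 2 - (1 / 2) ^ 2)
    have hK : (0 : ℝ) ≤ K := Nat.cast_nonneg K
    have hstep : ((K : ℝ) + 1) * (K + 3) * (2 * K + 1) ^ 2 ≤
        (K + 2) ^ 2 * ((2 * K + 1) ^ 2 - (1 / 2) ^ 2) := by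
      nlinarith
    refine le_of_mul_le_mul_left ?_ (by positivity : (0 : ℝ) < K + 2)
    push_cast
    calc (K + 2) * ((K + 1 + 2) * (X * (2 * K + 1) ^ 2))
        = (K + 3) * (2 * K + 1) ^ 2 * ((K + 2) * X) := by ring
      _ ≤ (K + 3) * (2 * K + 1) ^ 2 * (2 * (K + 1) * Y) := by gcongr
      _ = 2 * Y * ((K + 1) * (K + 3) * (2 * K + 1) ^ 2) := by ring
      _ ≤ 2 * Y * ((K + 2) ^ 2 * ((2 * K + 1) ^ 2 - (1 / 2) ^ 2)) :=
        mul_le_mul_of_nonneg_left hstep (by positivity)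
      _ = (K + 2) * (2 * (K + 1 + 1) * (Y * ((2 * K + 1) ^ 2 - (1 / 2) ^ 2))) := by ring

theorem eval_le_two_mul_eval_half {s : ℝ} (hs : |s| ≤ 1 / 2) :
    (oddRootsPoly K).eval s ≤ 2 * (oddRootsPoly K).eval (1 / 2) := by
  have hs2 : s ^ 2 ≤ 1 / 4 := by nlinarith [sq_abs s, abs_nonneg s]
  have hle : (oddRootsPoly K).eval s ≤ ∏ k ∈ range K, (2 * k + 1 : ℝ) ^ 2 := by
    rw [eval_eq]
    refine prod_le_prod (fun k _ => ?_) (fun k _ => by nlinarith)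
    nlinarith [(Nat.cast_nonneg k : (0 : ℝ) ≤ k)]
  have hK : (0 : ℝ) ≤ K := Nat.cast_nonneg K
  nlinarith [add_two_mul_prod_sq_le K, eval_half_pos K]

end oddRootsPoly

theorem add_two_le_natDegree_of_jump {q : ℝ[X]} {δ x : ℝ} {m K : ℕ} (hδ : 0 < δ) (hK : 2 * K ≤ m)
    (hmx : (m : ℝ) ≤ x) (hxm : x < m + 1)
    (hq : ∀ n : ℕ, m ≤ n + 2 * K → n ≤ m + 2 * K + 1 → q.eval (n : ℝ) ∈ Set.Icc 0 δ)
    (hqx : 2 * δ < q.eval x) :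
    2 * K + 2 ≤ q.natDegree := by
  have hmx' : (m : ℝ) < x := hmx.lt_of_ne fun h => by
    have := (hq m (by omega) (by omega)).2
    rw [h] at this
    linarith
  set c : ℝ := m + 1 / 2 with hc
  set W := (oddRootsPoly K).comp (X - C c)
  have hW : ∀ t, W.eval t = (oddRootsPoly K).eval (t - c) := fun t => by simp [W]
  have hWdeg : W.natDegree ≤ 2 * K := natDegree_comp_le.trans (by
    rw [natDegree_X_sub_C, mul_one]
    exact oddRootsPoly.natDegree_le K)
  have hnode : ∀ j ≤ K, (oddRootsPoly K).eval (1 / 2) ≤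
      (-1) ^ j * (oddRootsPoly K).eval (((max 1 (2 * j) : ℕ) : ℝ) - 1 / 2) := by
    rintro (_ | j) hj
    · norm_num
    · rw [show max 1 (2 * (j + 1)) = 2 * (j + 1) by omega]
      exact_mod_cast oddRootsPoly.eval_half_le_neg_one_pow_mul K hj
  -- the `j`-th nodes on either side of `x` lie at distance `|2j - 1/2|` from `c`
  have hl : ∀ j ≤ K, ((m + 1 - max 1 (2 * j) : ℕ) : ℝ) - c = -((max 1 (2 * j) : ℕ) - 1 / 2) :=
    fun j hj => by rw [Nat.cast_sub (by omega)]; push_cast; ring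
  have hr : ∀ j, ((m + max 1 (2 * j) : ℕ) : ℝ) - c = (max 1 (2 * j) : ℕ) - 1 / 2 :=
    fun j => by push_cast; ring
  have := add_add_two_le_max_natDegree_of_comparison (a := K) (b := K) (W := W)
    (l := fun j => ((m + 1 - max 1 (2 * j) : ℕ) : ℝ)) (r := fun j => ((m + max 1 (2 * j) : ℕ) : ℝ))
    hδ (oddRootsPoly.eval_half_pos K)
    (fun j hj => by exact_mod_cast (by omega : m + 1 - max 1 (2 * (j + 1)) < m + 1 - max 1 (2 * j)))
    (fun j hj => by exact_mod_cast (by omega : m + max 1 (2 * j) < m + max 1 (2 * (j + 1))))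
    (by simpa using hmx') (by simpa using hxm)
    (fun j hj => hq _ (by omega) (by omega)) (fun j hj => hq _ (by omega) (by omega))
    (fun j hj => by rw [hW, hl j hj, oddRootsPoly.eval_neg]; exact hnode j hj)
    (fun j hj => by rw [hW, hr]; exact hnode j hj)
    (by
      rw [hW]
      exact oddRootsPoly.eval_le_two_mul_eval_half K (abs_sub_le_iff.mpr ⟨by linarith, by linarith⟩))
    hqx
  omega

/-- Middle-of-the-range application of Paturi's lemma: if `0 ≤ q(j) ≤ δ` on all
integers `j ∈ [A, 4A]`, but `q(x) > 2δ` for some real `x ∈ [(3/2)A, 3A]`, then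
`deg q = Ω(A)`. -/
theorem middle_jump_degree_bound :
    ∃ c : ℝ, 0 < c ∧
      ∀ δ : ℝ, 0 < δ →
      ∀ A : ℕ, 1 ≤ A →
      ∀ q : Polynomial ℝ,
        (∀ j : ℕ, A ≤ j → j ≤ 4 * A → 0 ≤ q.eval (j : ℝ) ∧ q.eval (j : ℝ) ≤ δ) →
        (∃ x : ℝ, (3 / 2) * (A : ℝ) ≤ x ∧ x ≤ 3 * (A : ℝ) ∧ 2 * δ < q.eval x) →
        c * (A : ℝ) ≤ (q.natDegree : ℝ) := by
  refine ⟨1 / 2, by norm_num, fun δ hδ A hA q hq ⟨x, hx1, hx2, hqx⟩ => ?_⟩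
  set m := ⌊x⌋₊
  have hmx : (m : ℝ) ≤ x := Nat.floor_le ((by positivity : (0 : ℝ) ≤ 3 / 2 * A).trans hx1)
  have hxm : x < m + 1 := Nat.lt_floor_add_one x
  have hm3A : m ≤ 3 * A := by exact_mod_cast hmx.trans hx2
  have h3A : 3 * A < 2 * m + 2 := by exact_mod_cast (by linarith : (3 * A : ℝ) < 2 * m + 2)
  have hdeg := add_two_le_natDegree_of_jump (K := A / 4) hδ (by omega) hmx hxm
    (fun n h1 h2 => hq n (by omega) (by omega)) hqx
  have : (A : ℝ) ≤ 2 * q.natDegree := by exact_mod_cast (by omega : A ≤ 2 * q.natDegree)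
  linarith
end

section
/- Let n be a positive integer and let f : [n] → [n] be a function that differs from every permutation of [n] on at least n/8 coordinates, i.e., for every permutation σ of [n] the set {x ∈ [n] : f(x) ≠ σ(x)} has cardinality at least n/8. Then the set of x ∈ [n] such that f(x) has at least two preimages under f (i.e., there exists y ≠ x with f(y) = f(x)) has cardinality at least n/8. -/
/-!
The points `x` for which `f x` has no second preimage form a set on which `f` is injective.
On a finite type, an injection from a subset extends to a permutation `σ`, so `f` can disagree
with `σ` only at points with a collision, and the distance from `f` to the permutations bounds
the number of such points from below.
-/

open Function Set

theorem Set.InjOn.exists_perm_eqOn {α : Type*} [Finite α] {f : α → α} {s : Set α}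
    (hf : InjOn f s) : ∃ σ : Equiv.Perm α, EqOn f σ s := by
  have := Fintype.ofFinite α
  obtain ⟨g, hg⟩ := MapsTo.exists_equiv_extend_of_card_eq (t := Finset.univ)
    Finset.card_univ.symm (fun x _ => Finset.mem_univ (f x)) hf
  exact ⟨g.trans (Equiv.subtypeUnivEquiv Finset.mem_univ), fun x hx => (hg x hx).symm⟩

theorem injOn_compl_collisions {α β : Type*} (f : α → β) :
    InjOn f {x | ∃ y, y ≠ x ∧ f y = f x}ᶜ := by
  intro a ha b _ hab
  by_contra hne
  exact ha ⟨b, Ne.symm hne, hab.symm⟩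

theorem exists_perm_disagreements_subset_collisions {α : Type*} [Finite α] (f : α → α) :
    ∃ σ : Equiv.Perm α, {x | f x ≠ σ x} ⊆ {x | ∃ y, y ≠ x ∧ f y = f x} := by
  obtain ⟨σ, hσ⟩ := (injOn_compl_collisions f).exists_perm_eqOn
  refine ⟨σ, fun x hx => ?_⟩
  by_contra hcol
  exact hx (hσ hcol)

theorem far_from_permutation_many_collisions_general (n : ℕ)
    (f : Fin n → Fin n)
    (hfar : ∀ σ : Equiv.Perm (Fin n),
      (n : ℝ) / 8 ≤ ({x : Fin n | f x ≠ σ x}.ncard : ℝ)) :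
    (n : ℝ) / 8 ≤ (({x : Fin n | ∃ y : Fin n, y ≠ x ∧ f y = f x}).ncard : ℝ) := by
  obtain ⟨σ, hσ⟩ := exists_perm_disagreements_subset_collisions f
  exact (hfar σ).trans (by exact_mod_cast ncard_le_ncard hσ)

/-- Soundness of the SZK protocol for Permutation Testing: if `f : [n] → [n]` differs
from every permutation on at least `n/8` coordinates, then at least `n/8` points `x`
are such that `f(x)` has at least two preimages. -/
theorem far_from_permutation_many_collisions (n : ℕ) (hn : 0 < n)
    (f : Fin n → Fin n)
    (hfar : ∀ σ : Equiv.Perm (Fin n),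
      (n : ℝ) / 8 ≤ ({x : Fin n | f x ≠ σ x}.ncard : ℝ)) :
    (n : ℝ) / 8 ≤ (({x : Fin n | ∃ y : Fin n, y ≠ x ∧ f y = f x}).ncard : ℝ) :=
  far_from_permutation_many_collisions_general n f hfar
end

section
/- Let n, m, a be integers with 0 ≤ m ≤ 3n/4, a ≥ 2, and a dividing n − m. Let f : [n] → [n] be a function in S_{m,a}, meaning: there is a subset A ⊆ [n] with |A| = m such that f is injective on A, every element of f([n] \ A) has exactly a preimages under f, and f(A) ∩ f([n] \ A) = ∅. Then |Im f| = m + (n − m)/a, and f differs from every permutation of [n] on at least n/8 coordinates, i.e., for every permutation σ of [n], the set {x ∈ [n] : f(x) ≠ σ(x)} has cardinality at least n/8. -/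
/-!
Counting fibres, the `a`-to-one part contributes `(n - m)/a` points to the image, so
`|Im f| = m + (n - m)/a`. A permutation `σ` is injective, hence so is `f` on the set where
`f` and `σ` agree; that set is therefore no larger than `Im f`, and `f` differs from `σ` on at
least `n - m - (n - m)/a ≥ (n - m)/2 ≥ n/8` points.
-/

open Finset in
theorem Finset.card_eq_mul_card_image_of_card_fiber_eq {α β : Type*} [DecidableEq β]
    {f : α → β} (s : Finset α) (n : ℕ) (hn : ∀ b ∈ s.image f, #{a ∈ s | f a = b} = n) :
    #s = n * #(s.image f) :=
  le_antisymm (card_le_mul_card_image s n fun b hb ↦ (hn b hb).le)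
    (mul_card_image_le_card s n fun b hb ↦ (hn b hb).ge)

namespace Set

variable {α β : Type*}

theorem ncard_eq_mul_ncard_image_of_ncard_fiber_eq {f : α → β} {s : Set α} (hs : s.Finite)
    (n : ℕ) (hn : ∀ b ∈ f '' s, {x ∈ s | f x = b}.ncard = n) :
    s.ncard = n * (f '' s).ncard := by
  classical
  obtain ⟨s, rfl⟩ := hs.exists_finset_coe
  rw [← Finset.coe_image, ncard_coe_finset, ncard_coe_finset]
  refine s.card_eq_mul_card_image_of_card_fiber_eq n fun b hb ↦ ?_
  rw [← hn b (by simpa using hb), ← ncard_coe_finset, Finset.coe_filter]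
  rfl

theorem sep_fiber_eq_fiber_of_notMem_image_compl {f : α → β} {s : Set α} {b : β}
    (hb : b ∉ f '' sᶜ) : {x ∈ s | f x = b} = {x | f x = b} := by
  ext x
  refine ⟨And.right, fun hx ↦ ⟨?_, hx⟩⟩
  by_contra hxs
  exact hb ⟨x, hxs, hx⟩

theorem nat_card_le_ncard_range_add_ncard_ne [Finite α] (f : α → β) {g : α → β}
    (hg : g.Injective) : Nat.card α ≤ (range f).ncard + {x | f x ≠ g x}.ncard := by
  have hinj : InjOn f {x | f x = g x} := fun x (hx : f x = g x) y (hy : f y = g y) hxy ↦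
    hg (hx.symm.trans (hxy.trans hy))
  have hagree : {x | f x = g x}.ncard ≤ (range f).ncard :=
    hinj.ncard_image ▸ ncard_le_ncard (image_subset_range f _)
  have hsplit := ncard_add_ncard_compl {x | f x = g x}
  change _ + {x | f x ≠ g x}.ncard = _ at hsplit
  omega

end Set

theorem S_m_a_is_far_from_permutation_general (n m a : ℕ)
    (hm : 4 * m ≤ 3 * n) (ha : 2 ≤ a)
    (f : Fin n → Fin n)
    (A : Set (Fin n))
    (hAcard : A.ncard = m)
    (hinj : Set.InjOn f A)
    (hato : ∀ y ∈ f '' Aᶜ, ({x : Fin n | f x = y}).ncard = a)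
    (hdisj : Disjoint (f '' A) (f '' Aᶜ)) :
    (Set.range f).ncard = m + (n - m) / a ∧
      ∀ σ : Equiv.Perm (Fin n),
        (n : ℝ) / 8 ≤ (({x : Fin n | f x ≠ σ x}).ncard : ℝ) := by
  have hAc : Aᶜ.ncard = n - m := by
    have := Set.ncard_add_ncard_compl A
    rw [hAcard, Nat.card_eq_fintype_card, Fintype.card_fin] at this
    omega
  have hfibres : n - m = a * (f '' Aᶜ).ncard := by
    rw [← hAc]
    refine Set.ncard_eq_mul_ncard_image_of_ncard_fiber_eq (Set.toFinite _) a fun y hy ↦ ?_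
    have hyA : y ∉ f '' Aᶜᶜ := by rw [compl_compl]; exact Set.disjoint_right.mp hdisj hy
    rw [Set.sep_fiber_eq_fiber_of_notMem_image_compl hyA, hato y hy]
  have hrange : (Set.range f).ncard = m + (f '' Aᶜ).ncard := by
    rw [← Set.image_univ, ← Set.union_compl_self A, Set.image_union,
      Set.ncard_union_eq hdisj, hinj.ncard_image, hAcard]
  have hquot : (n - m) / a = (f '' Aᶜ).ncard := by
    rw [hfibres, Nat.mul_div_cancel_left _ (by omega)]
  refine ⟨hquot ▸ hrange, fun σ ↦ ?_⟩
  have hfar := Set.nat_card_le_ncard_range_add_ncard_ne f σ.injective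
  rw [Nat.card_eq_fintype_card, Fintype.card_fin, hrange] at hfar
  have hsmall : 2 * (f '' Aᶜ).ncard ≤ n - m := hfibres ▸ Nat.mul_le_mul_right _ ha
  rw [div_le_iff₀ (by norm_num)]
  exact_mod_cast (by omega : n ≤ {x | f x ≠ σ x}.ncard * 8)

/-- Every member of `S_{m,a}` (one-to-one on `m` coordinates, `a`-to-one on the
remaining `n - m` coordinates, with disjoint ranges) has image of size
`m + (n - m)/a`, and, when `m ≤ 3n/4` and `a ≥ 2`, differs from every permutation
of `[n]` on at least `n/8` coordinates. -/
theorem S_m_a_is_far_from_permutation (n m a : ℕ)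
    (hm : 4 * m ≤ 3 * n) (ha : 2 ≤ a) (hdvd : a ∣ n - m)
    (f : Fin n → Fin n)
    (A : Set (Fin n))
    (hAcard : A.ncard = m)
    (hinj : Set.InjOn f A)
    (hato : ∀ y ∈ f '' Aᶜ, ({x : Fin n | f x = y}).ncard = a)
    (hdisj : Disjoint (f '' A) (f '' Aᶜ)) :
    (Set.range f).ncard = m + (n - m) / a ∧
      ∀ σ : Equiv.Perm (Fin n),
        (n : ℝ) / 8 ≤ (({x : Fin n | f x ≠ σ x}).ncard : ℝ) :=
  S_m_a_is_far_from_permutation_general n m a hm ha f A hAcard hinj hato hdisj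
end
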